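/- arXiv:1604.02083 — 6 statements merged into one kernel-verified Lean document; each statement's English description precedes it below -/
import Mathlib

section
/- Let $L_f, L_r, m, I_z, C_r$ be real numbers and $V_x \neq 0$. Suppose the real numbers $V_y, \dot\psi, \dot V_y, \ddot\psi, F_{y1}$ satisfy $m(\dot V_y + \dot\psi V_x) = F_{y1} + F_{y2}$ and $I_z \ddot\psi = L_f F_{y1} - L_r F_{y2}$ with the linear rear tire model $F_{y2} = -C_r (V_y - L_r \dot\psi)/V_x$. Define the flat output $y_2 = L_f m V_y - I_z \dot\psi$ and its derivative $\dot y_2 = L_f m \dot V_y - I_z \ddot\psi$. Then $\dot y_2 = -\frac{C_r (L_f + L_r)}{V_x}(V_y - L_r \dot\psi) - L_f m \dot\psi V_x$. -/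
/-- With the lateral and yaw dynamics and the linear rear tire model
`Fy2 = -Cr (Vy - Lr ψ̇)/Vx`, the derivative of the flat output
`y₂ = Lf m Vy - Iz ψ̇`, namely `ẏ₂ = Lf m V̇y - Iz ψ̈`, equals
`-(Cr (Lf + Lr)/Vx) (Vy - Lr ψ̇) - Lf m ψ̇ Vx`. -/
theorem flat_output_derivative_formula
    (Lf Lr m Iz Cr Vx Vy ψ' Vy' ψ'' Fy1 Fy2 : ℝ)
    (hVx : Vx ≠ 0)
    (hlat : m * (Vy' + ψ' * Vx) = Fy1 + Fy2)
    (hyaw : Iz * ψ'' = Lf * Fy1 - Lr * Fy2)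
    (htire : Fy2 = -Cr * (Vy - Lr * ψ') / Vx) :
    Lf * m * Vy' - Iz * ψ'' =
      -(Cr * (Lf + Lr) / Vx) * (Vy - Lr * ψ') - Lf * m * ψ' * Vx := by
  subst htire
  field_simp at hlat hyaw ⊢
  linear_combination Lf * hlat - hyaw
end

section
/- Let $L_f, L_r, m, I_z, C_r$ be real numbers and $y_1 \neq 0$ a real number. Suppose real numbers $V_y, \dot\psi, y_2, \dot y_2$ satisfy the two equations $y_2 = L_f m V_y - I_z \dot\psi$ and $\dot y_2 = -\frac{C_r(L_f+L_r)}{y_1}(V_y - L_r\dot\psi) - L_f m \dot\psi\, y_1$, and assume $D := C_r(L_f+L_r)(I_z - L_r L_f m) + (L_f m y_1)^2 \neq 0$. Then the yaw rate is uniquely determined by the flat outputs: $\dot\psi = -\dfrac{L_f m\, y_1 \dot y_2 + C_r(L_f+L_r) y_2}{D}$. -/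
/-- Inversion of the flat-output map: the yaw rate `ψ̇` is uniquely
determined by the flat outputs `y₁, y₂` and the derivative `ẏ₂`. -/
theorem yaw_rate_from_flat_outputs
    (Lf Lr m Iz Cr y1 Vy ψ' y2 y2' : ℝ)
    (hy1 : y1 ≠ 0)
    (h1 : y2 = Lf * m * Vy - Iz * ψ')
    (h2 : y2' = -(Cr * (Lf + Lr) / y1) * (Vy - Lr * ψ') - Lf * m * ψ' * y1)
    (hD : Cr * (Lf + Lr) * (Iz - Lr * Lf * m) + (Lf * m * y1) ^ 2 ≠ 0) :
    ψ' = -((Lf * m * y1 * y2' + Cr * (Lf + Lr) * y2) /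
      (Cr * (Lf + Lr) * (Iz - Lr * Lf * m) + (Lf * m * y1) ^ 2)) := by
  field_simp
  subst h1 h2
  have hD' : Cr * (Lf + Lr) * (Iz - Lf * m * Lr) + Lf ^ 2 * m ^ 2 * y1 ^ 2 ≠ 0 := by
    convert hD using 1; ring
  field_simp
  ring
end

section
/- Let $L_f, L_r, m, I_z, C_r$ be real numbers with $L_f m \neq 0$, and $y_1 \neq 0$ a real number. Suppose real numbers $V_y, \dot\psi, y_2, \dot y_2$ satisfy $y_2 = L_f m V_y - I_z \dot\psi$ and $\dot y_2 = -\frac{C_r(L_f+L_r)}{y_1}(V_y - L_r\dot\psi) - L_f m \dot\psi\, y_1$, and assume $D := C_r(L_f+L_r)(I_z - L_r L_f m) + (L_f m y_1)^2 \neq 0$. Then the lateral speed is uniquely determined by the flat outputs: $V_y = \dfrac{y_2}{L_f m} - \dfrac{I_z}{L_f m}\cdot\dfrac{L_f m\, y_1 \dot y_2 + C_r(L_f+L_r) y_2}{D}$. -/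
/-- Inversion of the flat-output map: the lateral speed `Vy` is uniquely
determined by the flat outputs `y₁, y₂` and the derivative `ẏ₂`. -/
theorem lateral_speed_from_flat_outputs
    (Lf Lr m Iz Cr y1 Vy ψ' y2 y2' : ℝ)
    (hLfm : Lf * m ≠ 0)
    (hy1 : y1 ≠ 0)
    (h1 : y2 = Lf * m * Vy - Iz * ψ')
    (h2 : y2' = -(Cr * (Lf + Lr) / y1) * (Vy - Lr * ψ') - Lf * m * ψ' * y1)
    (hD : Cr * (Lf + Lr) * (Iz - Lr * Lf * m) + (Lf * m * y1) ^ 2 ≠ 0) :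
    Vy = y2 / (Lf * m) -
      (Iz / (Lf * m)) *
        ((Lf * m * y1 * y2' + Cr * (Lf + Lr) * y2) /
          (Cr * (Lf + Lr) * (Iz - Lr * Lf * m) + (Lf * m * y1) ^ 2)) := by
  have key : Lf * m * y1 * y2' + Cr * (Lf + Lr) * y2 =
      -ψ' * (Cr * (Lf + Lr) * (Iz - Lr * Lf * m) + (Lf * m * y1) ^ 2) := by
    field_simp at h2
    linear_combination Lf * m * h2 + Cr * (Lf + Lr) * h1
  rw [key, neg_mul, neg_div, mul_div_assoc, div_self hD, mul_one, mul_neg, sub_neg_eq_add]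
  field_simp [left_ne_zero_of_mul hLfm, right_ne_zero_of_mul hLfm]
  linear_combination -h1
end

section
/- Let $K_P > 0$ and $K_I > 0$ be real numbers. Let $e : \mathbb{R} \to \mathbb{R}$ be differentiable and $E : \mathbb{R} \to \mathbb{R}$ be differentiable with $E'(t) = e(t)$, and suppose $\dot e(t) + K_P e(t) + K_I E(t) = 0$ for all $t \ge 0$. Then $e(t) \to 0$ as $t \to +\infty$; i.e., the iPI closed loop with positive gains drives the tracking error to zero. -/
open Filter Complex

private lemma real_exp_tendsto_aux {c : ℝ} (hc : c < 0) :
    Tendsto (fun t : ℝ => Real.exp (c * t)) atTop (nhds 0) := by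
  refine Real.tendsto_exp_atBot.comp ?_
  have h1 : Tendsto (fun t : ℝ => (-c) * t) atTop atTop :=
    Tendsto.const_mul_atTop (by linarith) tendsto_id
  exact (tendsto_neg_atTop_atBot.comp h1).congr fun t => by simp [Function.comp]

private lemma norm_cexp_aux (z : ℂ) (t : ℝ) :
    ‖Complex.exp (z * t)‖ = Real.exp (z.re * t) := by
  rw [Complex.norm_exp]
  simp [Complex.mul_re]

private lemma exp_tendsto_aux {z : ℂ} (hz : z.re < 0) :
    Tendsto (fun t : ℝ => Complex.exp (z * t)) atTop (nhds 0) := by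
  rw [tendsto_zero_iff_norm_tendsto_zero]
  simp only [norm_cexp_aux]
  exact real_exp_tendsto_aux hz

private lemma mul_exp_tendsto_aux {c : ℝ} (hc : c < 0) :
    Tendsto (fun t : ℝ => t * Real.exp (c * t)) atTop (nhds 0) := by
  have hc' : (-c) ≠ 0 := by linarith
  have hbase : Tendsto (fun x : ℝ => (-c)⁻¹ * (x ^ 1 * Real.exp (-x))) atTop (nhds 0) := by
    simpa using (Real.tendsto_pow_mul_exp_neg_atTop_nhds_zero 1).const_mul ((-c)⁻¹)
  have hcomp : Tendsto (fun t : ℝ => (-c) * t) atTop atTop :=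
    Tendsto.const_mul_atTop (by linarith) tendsto_id
  refine (hbase.comp hcomp).congr fun t => ?_
  simp only [Function.comp, pow_one, neg_neg]
  rw [show (-c)⁻¹ * (-c * t * Real.exp (-(-c * t))) =
      ((-c)⁻¹ * (-c)) * (t * Real.exp (c * t)) by ring_nf, inv_mul_cancel₀ hc', one_mul]

private lemma hasDerivAt_cexp_neg (c : ℂ) (t : ℝ) :
    HasDerivAt (fun t : ℝ => Complex.exp (-(c * t))) (Complex.exp (-(c * t)) * (-c)) t := by
  have h0 : HasDerivAt (fun t : ℝ => -(c * (t : ℂ))) (-c) t := by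
    have := (((hasDerivAt_id t).ofReal_comp).const_mul c).neg
    simp at this
    exact this
  exact h0.cexp

/-- Solution of `u' = c u` on `[0, ∞)`. -/
private lemma exp_sol (c : ℂ) (u : ℝ → ℂ) (hcont : Continuous u)
    (hu : ∀ t, 0 ≤ t → HasDerivAt u (c * u t) t) :
    ∀ t, 0 ≤ t → u t = u 0 * Complex.exp (c * t) := by
  set v : ℝ → ℂ := fun t => u t * Complex.exp (-(c * t)) with hv
  have hdv : ∀ t, 0 ≤ t → HasDerivAt v 0 t := by
    intro t ht
    have := (hu t ht).mul (hasDerivAt_cexp_neg c t)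
    refine HasDerivAt.congr_deriv this (Eq.symm ?_)
    ring
  have hvconst : ∀ t, 0 ≤ t → v t = v 0 := by
    intro t ht
    have hcv : ContinuousOn v (Set.Icc 0 t) :=
      (hcont.mul (Complex.continuous_exp.comp ((continuous_const.mul Complex.continuous_ofReal).neg))).continuousOn
    exact constant_of_has_deriv_right_zero hcv
      (fun x hx => (hdv x hx.1).hasDerivWithinAt) t ⟨ht, le_rfl⟩
  intro t ht
  have h := hvconst t ht
  simp only [hv] at h
  rw [Complex.exp_neg, mul_inv_eq_iff_eq_mul₀ (Complex.exp_ne_zero _)] at h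
  simpa [mul_comm] using h

/-- The iPI closed-loop error equation `ė + K_P e + K_I E = 0` (with `E` an
antiderivative of `e`) with positive gains drives the tracking error to
zero as `t → +∞`. -/
theorem iPI_error_tendsto_zero
    (KP KI : ℝ) (hKP : 0 < KP) (hKI : 0 < KI)
    (e E : ℝ → ℝ)
    (he : Differentiable ℝ e) (hE : Differentiable ℝ E)
    (hEe : ∀ t, deriv E t = e t)
    (hode : ∀ t : ℝ, 0 ≤ t → deriv e t + KP * e t + KI * E t = 0) :
    Filter.Tendsto e Filter.atTop (nhds 0) := by
  obtain ⟨s, hs⟩ := IsAlgClosed.exists_pow_nat_eq ((KP : ℂ) ^ 2 - 4 * KI) (n := 2) two_pos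
  set l1 : ℂ := (-KP + s) / 2 with hl1def
  set l2 : ℂ := (-KP - s) / 2 with hl2def
  have hsum : l1 + l2 = -KP := by rw [hl1def, hl2def]; ring
  have hprod : l1 * l2 = KI := by
    rw [hl1def, hl2def]
    have : ((-KP : ℂ) + s) / 2 * (((-KP : ℂ) - s) / 2) = ((KP : ℂ) ^ 2 - s ^ 2) / 4 := by ring
    rw [this, hs]; ring
  -- real parts are negative
  have hsre : |s.re| < KP := by
    have him : s.re * s.im + s.im * s.re = 0 := by
      have h := congrArg Complex.im hs
      simpa [pow_two, Complex.mul_im] using h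
    have h2 : s.re * s.im = 0 := by linarith
    rcases mul_eq_zero.mp h2 with h | h
    · rw [h, abs_zero]; exact hKP
    · have hre : s.re * s.re - s.im * s.im = KP ^ 2 - 4 * KI := by
        have h := congrArg Complex.re hs
        simpa [pow_two, Complex.mul_re] using h
      rw [h] at hre
      nlinarith [_root_.sq_abs s.re, abs_nonneg s.re]
  have hre1 : l1.re < 0 := by
    rw [hl1def]
    have : ((-(KP:ℂ) + s) / 2).re = (-KP + s.re) / 2 := by
      rw [show ((2:ℂ)) = ((2:ℝ):ℂ) by norm_num, Complex.div_ofReal_re]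
      simp
    rw [this]
    cases abs_lt.mp hsre; linarith
  have hre2 : l2.re < 0 := by
    rw [hl2def]
    have : ((-(KP:ℂ) - s) / 2).re = (-KP - s.re) / 2 := by
      rw [show ((2:ℂ)) = ((2:ℝ):ℂ) by norm_num, Complex.div_ofReal_re]
      simp
    rw [this]
    cases abs_lt.mp hsre; linarith
  -- complexified functions
  set ec : ℝ → ℂ := fun t => (e t : ℂ) with hec
  set Ec : ℝ → ℂ := fun t => (E t : ℂ) with hEc
  have hecd : ∀ t, HasDerivAt ec ((deriv e t : ℝ) : ℂ) t := fun t =>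
    ((he t).hasDerivAt).ofReal_comp
  have hEcd : ∀ t, HasDerivAt Ec (ec t) t := fun t => by
    have := ((hE t).hasDerivAt).ofReal_comp
    rw [hEe t] at this
    exact this
  have hcec : Continuous ec := Complex.continuous_ofReal.comp he.continuous
  have hcEc : Continuous Ec := Complex.continuous_ofReal.comp hE.continuous
  have hode' : ∀ t : ℝ, 0 ≤ t → ((deriv e t : ℝ) : ℂ) = -KP * ec t - KI * Ec t := by
    intro t ht
    have h := hode t ht
    have : deriv e t = -(KP * e t) - KI * E t := by linarith
    rw [this]; push_cast; ring
  set f : ℝ → ℂ := fun t => ec t - l1 * Ec t with hfdef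
  set g : ℝ → ℂ := fun t => ec t - l2 * Ec t with hgdef
  have hfd : ∀ t, 0 ≤ t → HasDerivAt f (l2 * f t) t := by
    intro t ht
    have h := (hecd t).sub ((hEcd t).const_mul l1)
    refine HasDerivAt.congr_deriv h (Eq.symm ?_)
    rw [hode' t ht, hfdef]
    linear_combination (-(ec t)) * hsum - (Ec t) * hprod
  have hgd : ∀ t, 0 ≤ t → HasDerivAt g (l1 * g t) t := by
    intro t ht
    have h := (hecd t).sub ((hEcd t).const_mul l2)
    refine HasDerivAt.congr_deriv h (Eq.symm ?_)
    rw [hode' t ht, hgdef]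
    linear_combination (-(ec t)) * hsum - (Ec t) * hprod
  have hfsol : ∀ t, 0 ≤ t → f t = f 0 * Complex.exp (l2 * t) :=
    exp_sol l2 f (hcec.sub (continuous_const.mul hcEc)) hfd
  have hgsol : ∀ t, 0 ≤ t → g t = g 0 * Complex.exp (l1 * t) :=
    exp_sol l1 g (hcec.sub (continuous_const.mul hcEc)) hgd
  -- it suffices that ec → 0
  suffices hZ : Tendsto ec atTop (nhds 0) by
    have hcont := (Complex.continuous_re.tendsto (0 : ℂ)).comp hZ
    simpa [Function.comp_def, hec] using hcont
  have hfZ : Tendsto f atTop (nhds 0) := by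
    have := (exp_tendsto_aux hre2).const_mul (f 0)
    rw [mul_zero] at this
    exact this.congr' ((eventually_ge_atTop 0).mono fun t ht => (hfsol t ht).symm)
  by_cases hll : l1 = l2
  · -- repeated root case
    have hfsol' : ∀ t, 0 ≤ t → f t = f 0 * Complex.exp (l1 * t) := by
      intro t ht; rw [hfsol t ht, ← hll]
    -- solve for Ec : w t = Ec t * exp(-(l1 t)) - f 0 * t is constant on [0, ∞)
    set w : ℝ → ℂ := fun t => Ec t * Complex.exp (-(l1 * t)) - f 0 * t with hw
    have hdw : ∀ t, 0 ≤ t → HasDerivAt w 0 t := by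
      intro t ht
      have h1 := (hEcd t).mul (hasDerivAt_cexp_neg l1 t)
      have h2 : HasDerivAt (fun t : ℝ => f 0 * (t : ℂ)) (f 0) t := by
        simpa using ((hasDerivAt_id t).ofReal_comp).const_mul (f 0)
      have h3 := h1.sub h2
      refine HasDerivAt.congr_deriv h3 (Eq.symm ?_)
      have hfe : (ec t - l1 * Ec t) * Complex.exp (-(l1 * t)) = f 0 := by
        rw [show ec t - l1 * Ec t = f t from rfl, hfsol' t ht, mul_assoc,
          ← Complex.exp_add]
        simp
      linear_combination -hfe
    have hwconst : ∀ t, 0 ≤ t → w t = w 0 := by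
      intro t ht
      have hcw : ContinuousOn w (Set.Icc 0 t) :=
        ((hcEc.mul (Complex.continuous_exp.comp ((continuous_const.mul Complex.continuous_ofReal).neg))).sub
          (continuous_const.mul Complex.continuous_ofReal)).continuousOn
      exact constant_of_has_deriv_right_zero hcw
        (fun x hx => (hdw x hx.1).hasDerivWithinAt) t ⟨ht, le_rfl⟩
    have hEsol : ∀ t, 0 ≤ t → Ec t = (Ec 0 + f 0 * t) * Complex.exp (l1 * t) := by
      intro t ht
      have h := hwconst t ht
      simp only [hw] at h
      rw [sub_eq_iff_eq_add] at h
      rw [Complex.exp_neg, mul_inv_eq_iff_eq_mul₀ (Complex.exp_ne_zero _)] at h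
      rw [h]
      push_cast
      ring_nf
      rw [Complex.exp_zero]
      ring
    -- explicit formula for ec
    have hform : ∀ t : ℝ, 0 ≤ t →
        ec t = ((f 0 + l1 * Ec 0) + (l1 * f 0) * t) * Complex.exp (l1 * t) := by
      intro t ht
      have h1 : ec t = f t + l1 * Ec t := by rw [hfdef]; ring
      rw [h1, hfsol' t ht, hEsol t ht]
      ring
    apply squeeze_zero_norm'
      (a := fun t => ‖f 0 + l1 * Ec 0‖ * Real.exp (l1.re * t) +
        ‖l1 * f 0‖ * (t * Real.exp (l1.re * t)))
    · filter_upwards [eventually_ge_atTop (0 : ℝ)] with t ht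
      rw [hform t ht, norm_mul, norm_cexp_aux]
      have hb : ‖(f 0 + l1 * Ec 0) + (l1 * f 0) * (t : ℂ)‖ ≤
          ‖f 0 + l1 * Ec 0‖ + ‖l1 * f 0‖ * t := by
        refine (norm_add_le _ _).trans ?_
        rw [norm_mul, Complex.norm_real, Real.norm_eq_abs, _root_.abs_of_nonneg ht]
      have hexppos : (0 : ℝ) ≤ Real.exp (l1.re * t) := (Real.exp_pos _).le
      nlinarith [norm_nonneg (f 0 + l1 * Ec 0), norm_nonneg (l1 * f 0)]
    · have h1 := (real_exp_tendsto_aux hre1).const_mul ‖f 0 + l1 * Ec 0‖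
      have h2 := (mul_exp_tendsto_aux hre1).const_mul ‖l1 * f 0‖
      simpa using h1.add h2
  · -- distinct roots
    have hgZ : Tendsto g atTop (nhds 0) := by
      have := (exp_tendsto_aux hre1).const_mul (g 0)
      rw [mul_zero] at this
      exact this.congr' ((eventually_ge_atTop 0).mono fun t ht => (hgsol t ht).symm)
    have hkey : ∀ t, ec t = (l2 * f t - l1 * g t) / (l2 - l1) := by
      intro t
      rw [hfdef, hgdef]
      field_simp [sub_ne_zero.mpr (Ne.symm hll)]
      ring
    have : Tendsto (fun t => (l2 * f t - l1 * g t) / (l2 - l1)) atTop (nhds 0) := by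
      have h := ((hfZ.const_mul l2).sub (hgZ.const_mul l1)).div_const (l2 - l1)
      simpa using h
    exact this.congr fun t => (hkey t).symm
end

section
/- Let $\tau > 0$, $\alpha, F \in \mathbb{R}$, let $u : [0,\tau] \to \mathbb{R}$ be continuous and $y : [0,\tau] \to \mathbb{R}$ be differentiable with $\dot y(\sigma) = F + \alpha u(\sigma)$ for all $\sigma \in [0,\tau]$. Then the constant $F$ is exactly recovered by the algebraic estimator: $F = -\dfrac{6}{\tau^3}\int_0^{\tau}\big[(\tau - 2\sigma)\,y(\sigma) + \alpha\,\sigma(\tau-\sigma)\,u(\sigma)\big]\,d\sigma$. -/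
/-- Exactness of the algebraic estimator of `F` for the first-order
ultra-local model `ẏ = F + α u` over the window `[0, τ]`. -/
theorem algebraic_estimator_first_order
    (τ α F : ℝ) (hτ : 0 < τ)
    (u y : ℝ → ℝ)
    (hu : ContinuousOn u (Set.Icc 0 τ))
    (hy : ∀ σ ∈ Set.Icc (0 : ℝ) τ, HasDerivAt y (F + α * u σ) σ) :
    F = -(6 / τ ^ 3) *
      ∫ σ in (0 : ℝ)..τ, ((τ - 2 * σ) * y σ + α * σ * (τ - σ) * u σ) := by
  have hτ' : (0:ℝ) ≤ τ := hτ.le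
  have huIcc : Set.uIcc (0:ℝ) τ = Set.Icc 0 τ := Set.uIcc_of_le hτ'
  have hyc : ContinuousOn y (Set.Icc 0 τ) := fun σ hσ =>
    ((hy σ hσ).continuousAt).continuousWithinAt
  have hder : ∀ σ ∈ Set.uIcc (0:ℝ) τ, HasDerivAt (fun s => s*(τ-s)*y s)
      ((τ - 2*σ)*y σ + σ*(τ-σ)*(F + α*u σ)) σ := by
    intro σ hσ
    rw [huIcc] at hσ
    have h1 : HasDerivAt (fun s : ℝ => s*(τ-s)) (τ - 2*σ) σ := by
      have := (hasDerivAt_id σ).mul ((hasDerivAt_const σ τ).sub (hasDerivAt_id σ))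
      refine this.congr_deriv ?_
      simp only [id_eq, Pi.sub_apply]
      ring
    exact h1.mul (hy σ hσ)
  have hint : IntervalIntegrable (fun σ => (τ - 2*σ)*y σ + σ*(τ-σ)*(F + α*u σ))
      MeasureTheory.volume 0 τ := by
    apply ContinuousOn.intervalIntegrable
    rw [huIcc]
    exact ((continuousOn_const.sub (continuousOn_const.mul continuousOn_id)).mul hyc).add
      ((continuousOn_id.mul (continuousOn_const.sub continuousOn_id)).mul
        (continuousOn_const.add (continuousOn_const.mul hu)))
  have hFTC := intervalIntegral.integral_eq_sub_of_hasDerivAt hder hint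
  have h0 : (∫ σ in (0:ℝ)..τ, ((τ - 2*σ)*y σ + σ*(τ-σ)*(F + α*u σ))) = 0 := by
    rw [hFTC]; ring
  have hintF : IntervalIntegrable (fun σ : ℝ => F*(σ*(τ-σ))) MeasureTheory.volume 0 τ := by
    apply Continuous.intervalIntegrable
    fun_prop
  have hpoly : (∫ σ in (0:ℝ)..τ, F*(σ*(τ-σ))) = F * τ^3 / 6 := by
    have hd : ∀ σ ∈ Set.uIcc (0:ℝ) τ,
        HasDerivAt (fun s : ℝ => F*(τ*s^2/2 - s^3/3)) (F*(σ*(τ-σ))) σ := by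
      intro σ _
      have h2 := ((((hasDerivAt_pow 2 σ).const_mul τ).div_const 2).sub
          ((hasDerivAt_pow 3 σ).div_const 3)).const_mul F
      refine h2.congr_deriv ?_
      push_cast
      ring
    rw [intervalIntegral.integral_eq_sub_of_hasDerivAt hd hintF]
    ring
  have hsplit : (∫ σ in (0:ℝ)..τ, ((τ - 2*σ)*y σ + α*σ*(τ-σ)*u σ)) = -(F * τ^3 / 6) := by
    have : (fun σ : ℝ => (τ - 2*σ)*y σ + α*σ*(τ-σ)*u σ)
        = fun σ : ℝ => ((τ - 2*σ)*y σ + σ*(τ-σ)*(F + α*u σ)) - F*(σ*(τ-σ)) := by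
      funext σ; ring
    rw [this, intervalIntegral.integral_sub hint hintF, h0, hpoly]
    ring
  rw [hsplit]
  field_simp
end

section
/- Let $\tau > 0$, $\alpha, F \in \mathbb{R}$, let $u : [0,\tau] \to \mathbb{R}$ be continuous and $y : [0,\tau] \to \mathbb{R}$ be twice differentiable with $\ddot y(\sigma) = F + \alpha u(\sigma)$ for all $\sigma \in [0,\tau]$. Then the constant $F$ is exactly recovered by the second-order algebraic estimator: $F = \dfrac{60}{\tau^5}\int_0^{\tau}(\tau^2 + 6\sigma^2 - 6\tau\sigma)\,y(\sigma)\,d\sigma \; - \; \dfrac{30\,\alpha}{\tau^5}\int_0^{\tau}\sigma^2(\tau-\sigma)^2\,u(\sigma)\,d\sigma$. -/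
/-- Exactness of the second-order algebraic estimator of `F` for the
ultra-local model `ÿ = F + α u` over the window `[0, τ]`. -/
theorem algebraic_estimator_second_order
    (τ α F : ℝ) (hτ : 0 < τ)
    (u y y' : ℝ → ℝ)
    (hu : ContinuousOn u (Set.Icc 0 τ))
    (hy : ∀ σ ∈ Set.Icc (0 : ℝ) τ, HasDerivAt y (y' σ) σ)
    (hy' : ∀ σ ∈ Set.Icc (0 : ℝ) τ, HasDerivAt y' (F + α * u σ) σ) :
    F = (60 / τ ^ 5) *
          (∫ σ in (0 : ℝ)..τ, (τ ^ 2 + 6 * σ ^ 2 - 6 * τ * σ) * y σ)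
        - (30 * α / τ ^ 5) *
          ∫ σ in (0 : ℝ)..τ, σ ^ 2 * (τ - σ) ^ 2 * u σ := by
  have hτ0 : (0:ℝ) ≤ τ := hτ.le
  have huIcc : Set.uIcc (0:ℝ) τ = Set.Icc 0 τ := Set.uIcc_of_le hτ0
  -- derivatives of the polynomial weights
  have hP1 : ∀ σ : ℝ, HasDerivAt (fun x : ℝ => x*τ^2 - 3*τ*x^2 + 2*x^3)
      (τ^2 + 6*σ^2 - 6*τ*σ) σ := by
    intro σ
    have h := (((hasDerivAt_id σ).mul_const (τ^2)).sub
        ((hasDerivAt_pow 2 σ).const_mul (3*τ))).add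
        ((hasDerivAt_pow 3 σ).const_mul 2)
    refine h.congr_deriv ?_
    push_cast; ring
  have hP : ∀ σ : ℝ, HasDerivAt (fun x : ℝ => x^2*(τ-x)^2/2)
      (σ*τ^2 - 3*τ*σ^2 + 2*σ^3) σ := by
    intro σ
    have h := ((hasDerivAt_pow 2 σ).mul
        (((hasDerivAt_const σ τ).sub (hasDerivAt_id σ)).pow 2)).div_const 2
    refine h.congr_deriv ?_
    simp only [Pi.sub_apply, Pi.pow_apply, id_eq]; push_cast; ring
  -- continuity and integrability
  have hyc : ContinuousOn y (Set.Icc 0 τ) :=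
    fun σ hσ => ((hy σ hσ).continuousAt).continuousWithinAt
  have hy'c : ContinuousOn y' (Set.Icc 0 τ) :=
    fun σ hσ => ((hy' σ hσ).continuousAt).continuousWithinAt
  have hy'int : IntervalIntegrable y' MeasureTheory.volume 0 τ :=
    (hy'c.mono (by rw [huIcc])).intervalIntegrable
  have hwint : IntervalIntegrable (fun σ : ℝ => τ^2 + 6*σ^2 - 6*τ*σ)
      MeasureTheory.volume 0 τ := by
    apply Continuous.intervalIntegrable; fun_prop
  have hP1int : IntervalIntegrable (fun σ : ℝ => σ*τ^2 - 3*τ*σ^2 + 2*σ^3)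
      MeasureTheory.volume 0 τ := by
    apply Continuous.intervalIntegrable; fun_prop
  have hy''int : IntervalIntegrable (fun σ => F + α * u σ) MeasureTheory.volume 0 τ := by
    apply ContinuousOn.intervalIntegrable
    rw [huIcc]
    exact (continuousOn_const).add (continuousOn_const.mul hu)
  -- first integration by parts
  have ibp1 := intervalIntegral.integral_mul_deriv_eq_deriv_mul
      (u := y) (u' := y') (v := fun x : ℝ => x*τ^2 - 3*τ*x^2 + 2*x^3)
      (v' := fun σ : ℝ => τ^2 + 6*σ^2 - 6*τ*σ) (a := 0) (b := τ)
      (fun x hx => hy x (huIcc ▸ hx)) (fun x _ => hP1 x) hy'int hwint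
  -- second integration by parts
  have ibp2 := intervalIntegral.integral_mul_deriv_eq_deriv_mul
      (u := y') (u' := fun σ => F + α * u σ) (v := fun x : ℝ => x^2*(τ-x)^2/2)
      (v' := fun σ : ℝ => σ*τ^2 - 3*τ*σ^2 + 2*σ^3) (a := 0) (b := τ)
      (fun x hx => hy' x (huIcc ▸ hx)) (fun x _ => hP x) hy''int hP1int
  -- evaluate the polynomial integral
  have hpolyint : IntervalIntegrable (fun x : ℝ => x^2*(τ-x)^2/2)
      MeasureTheory.volume 0 τ := by
    apply Continuous.intervalIntegrable; fun_prop
  have hsplit : (∫ x in (0:ℝ)..τ, (F + α * u x) * (x^2*(τ-x)^2/2))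
      = F * (τ^5/60) + (α/2) * ∫ σ in (0:ℝ)..τ, σ ^ 2 * (τ - σ) ^ 2 * u σ := by
    have h1 : ∀ x : ℝ, (F + α * u x) * (x^2*(τ-x)^2/2)
        = F * (x^2*(τ-x)^2/2) + (α/2) * (x^2*(τ-x)^2 * u x) := fun x => by ring
    simp_rw [h1]
    rw [intervalIntegral.integral_add, intervalIntegral.integral_const_mul,
        intervalIntegral.integral_const_mul]
    · have hpoly : (∫ x in (0:ℝ)..τ, x^2*(τ-x)^2/2) = τ^5/60 := by
        have h2 : ∀ x : ℝ, x^2*(τ-x)^2/2 = x^4/2 - τ*x^3 + (τ^2/2)*x^2 :=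
          fun x => by ring
        simp_rw [h2]
        rw [intervalIntegral.integral_add, intervalIntegral.integral_sub]
        · simp [integral_pow, intervalIntegral.integral_div,
            intervalIntegral.integral_const_mul]
          ring
        all_goals { apply Continuous.intervalIntegrable; fun_prop }
      rw [hpoly]
    · apply Continuous.intervalIntegrable; fun_prop
    · apply ContinuousOn.intervalIntegrable
      rw [huIcc]
      exact continuousOn_const.mul
        (((Continuous.continuousOn (by fun_prop)).mul hu))
  -- combine
  have hA : (∫ σ in (0:ℝ)..τ, (τ ^ 2 + 6 * σ ^ 2 - 6 * τ * σ) * y σ)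
      = ∫ x in (0:ℝ)..τ, y x * (τ^2 + 6*x^2 - 6*τ*x) := by
    simp [mul_comm]
  have hτ5 : τ^5 ≠ 0 := by positivity
  rw [hA, ibp1]
  rw [ibp2] at *
  rw [hsplit]
  field_simp
  ring
end
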